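/- arXiv:2302.01305 — 3 statements merged into one kernel-verified Lean document; each statement's English description precedes it below -/
import Mathlib

section
/- Any permutation of entries of an m1 × m2 table can be achieved by a sequence of at most m2 column permutations, followed by at most m1 row permutations, followed by at most m2 column permutations (the Rubik Table theorem). -/
/-!
Record for each cell `(i, j)` only the column `(σ (i, j)).2` its entry must reach. Every column
is then the target of exactly `m1` cells, so "column `j` has a cell bound for column `c`" is an
`m1`-regular bipartite multigraph on columns. By Hall's theorem it has a perfect matching, i.e.
one cell per column with all targets distinct; removing it leaves an `(m1 - 1)`-regular graph,
and induction splits the cells into `m1` such matchings. The first column phase moves the `k`-th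
matching into row `k`, the row phase then sends every entry of row `k` to its target column,
and after that each entry is already in the right column, so a last column phase finishes.
-/

open Finset Equiv

section RegularTable

variable {β : Type*} [Fintype β] [DecidableEq β]

theorem exists_bijective_transversal {ι : Type*} [Fintype ι] [Nonempty ι] (D : ι × β → β)
    (hD : ∀ c, #{p | D p = c} ≤ Fintype.card ι) :
    ∃ s : β → ι, Function.Bijective fun j => D (s j, j) := by
  classical
  have hall (S : Finset β) : #S ≤ #{c | ∃ j ∈ S, ∃ i, D (i, j) = c} := by
    refine Nat.le_of_mul_le_mul_left ?_ (Fintype.card_pos (α := ι))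
    calc Fintype.card ι * #S = #(univ ×ˢ S) := by simp
      _ ≤ Fintype.card ι * #{c | ∃ j ∈ S, ∃ i, D (i, j) = c} :=
        card_le_mul_card_image_of_maps_to
          (fun p hp => mem_filter.mpr ⟨mem_univ _, p.2, (mem_product.mp hp).2, p.1, rfl⟩)
          _ fun c _ => (card_le_card (filter_subset_filter _ (subset_univ _))).trans (hD c)
  obtain ⟨f, hf, hfD⟩ := (Fintype.all_card_le_filter_rel_iff_exists_injective _).mp hall
  choose s hs using hfD
  refine ⟨s, ?_⟩
  rw [show (fun j => D (s j, j)) = f from funext hs]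
  exact Finite.injective_iff_bijective.mp hf

def removeTransversal {n : ℕ} (D : Fin (n + 1) × β → β) (s : β → Fin (n + 1)) : Fin n × β → β :=
  fun p => D (swap 0 (s p.2) p.1.succ, p.2)

theorem card_fiber_removeTransversal {n : ℕ} (D : Fin (n + 1) × β → β) (s : β → Fin (n + 1))
    (hs : Function.Bijective fun j => D (s j, j)) (c : β) :
    #{p | removeTransversal D s p = c} + 1 = #{p | D p = c} := by
  simp only [card_filter, Fintype.sum_prod_type_right]
  have hcol (j : β) : ∑ i, (if D (i, j) = c then 1 else 0) = (if D (s j, j) = c then 1 else 0) +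
      ∑ i : Fin n, if removeTransversal D s (i, j) = c then 1 else 0 := by
    rw [← Equiv.sum_comp (swap 0 (s j)), Fin.sum_univ_succ, swap_apply_left]
    rfl
  rw [sum_congr rfl fun j _ => hcol j, sum_add_distrib,
    hs.sum_comp fun c' => if c' = c then 1 else 0, sum_ite_eq', if_pos (mem_univ c), add_comm]

theorem exists_perm_columns_bijective_rows :
    ∀ (n : ℕ) (D : Fin n × β → β), (∀ c, #{p | D p = c} = n) →
      ∃ t : β → Perm (Fin n), ∀ i, Function.Bijective fun j => D (t j i, j)
  | 0, _, _ => ⟨1, fun i => i.elim0⟩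
  | n + 1, D, hD => by
    obtain ⟨s, hs⟩ := exists_bijective_transversal D fun c => by simp [hD]
    obtain ⟨t, ht⟩ := exists_perm_columns_bijective_rows n (removeTransversal D s) fun c =>
      Nat.succ_injective ((card_fiber_removeTransversal D s hs c).trans (hD c))
    refine ⟨fun j => Perm.decomposeFin.symm (s j, t j), Fin.cases ?_ fun i => ?_⟩
    · simpa [Perm.decomposeFin_symm_apply_zero] using hs
    · simpa [removeTransversal, Perm.decomposeFin_symm_apply_succ] using ht i

theorem card_filter_snd_perm_eq {α : Type*} [Fintype α] (σ : Perm (α × β)) (c : β) :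
    #{p | (σ p).2 = c} = Fintype.card α := by
  simp only [card_filter]
  rw [Equiv.sum_comp σ fun q => if q.2 = c then 1 else 0, Fintype.sum_prod_type_right]
  simp [apply_ite]

end RegularTable

namespace Equiv.Perm

variable {α β : Type*}

theorem exists_prodCongrLeft_eq_of_snd (τ : Perm (α × β)) (hτ : ∀ q, (τ q).2 = q.2) :
    ∃ f : β → Perm α, prodCongrLeft f = τ := by
  have hτ_symm (q) : (τ.symm q).2 = q.2 := by simpa using (hτ (τ.symm q)).symm
  have hfst (q) : ((τ q).1, q.2) = τ q := Prod.ext rfl (hτ q).symm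
  have hfst_symm (q) : ((τ.symm q).1, q.2) = τ.symm q := Prod.ext rfl (hτ_symm q).symm
  refine ⟨fun j => ⟨fun i => (τ (i, j)).1, fun i => (τ.symm (i, j)).1, fun i => ?_, fun i => ?_⟩, ?_⟩
  · simp [hfst]
  · simp [hfst_symm]
  · ext ⟨i, j⟩ <;> simp [hτ]

theorem exists_prodCongrLeft_mul_of_snd_eq (σ ρ : Perm (α × β)) (h : ∀ q, (σ q).2 = (ρ q).2) :
    ∃ f : β → Perm α, σ = prodCongrLeft f * ρ := by
  obtain ⟨f, hf⟩ := exists_prodCongrLeft_eq_of_snd (σ * ρ⁻¹) fun q => by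
    simpa using h (ρ⁻¹ q)
  exact ⟨f, by rw [hf, inv_mul_cancel_right]⟩

end Equiv.Perm

/-- The Rubik Table theorem: any permutation of the entries of an `m1 × m2`
table can be achieved by at most `m2` column permutations (one per column),
followed by at most `m1` row permutations (one per row), followed by at most
`m2` column permutations. -/
theorem rubik_table (m1 m2 : ℕ) (σ : Equiv.Perm (Fin m1 × Fin m2)) :
    ∃ (f1 : Fin m2 → Equiv.Perm (Fin m1))
      (g : Fin m1 → Equiv.Perm (Fin m2))
      (f2 : Fin m2 → Equiv.Perm (Fin m1)),
      ∀ i : Fin m1, ∀ j : Fin m2,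
        σ (i, j) =
          (let c1 : Fin m1 × Fin m2 := (f1 j i, j)
           let r : Fin m1 × Fin m2 := (c1.1, g c1.1 c1.2)
           (f2 r.2 r.1, r.2)) := by
  obtain ⟨t, ht⟩ := exists_perm_columns_bijective_rows m1 (fun p => (σ p).2)
    fun c => by simpa using card_filter_snd_perm_eq σ c
  let g i := Equiv.ofBijective _ (ht i)
  obtain ⟨f2, hσ⟩ := Perm.exists_prodCongrLeft_mul_of_snd_eq σ
    (prodCongrRight g * prodCongrLeft fun j => (t j)⁻¹) fun ⟨i, j⟩ => by simp [g]
  exact ⟨fun j => (t j)⁻¹, g, f2, fun i j => by rw [hσ]; rfl⟩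
end

section
/- If each column of an m1 × m2 grid contains items that must realize an arbitrary permutation within that column, and two adjacent empty columns are available, then the permutation of a single column of at most m1 items can be realized by collision-free cardinal moves in O(m1) timesteps. -/
/-- Manhattan distance on an `m1 × 3` grid strip. -/
def stripDist {m1 : ℕ} (a b : Fin m1 × Fin 3) : ℕ :=
  Nat.dist a.1 b.1 + Nat.dist a.2 b.2

/-! Auxiliary construction: a "carousel" schedule.  Items move from
`(i,0)` into column `1`, circulate around the cycle formed by columns `1`
and `2` (of length `2*m1`), and each item exits left into `(σ i, 0)` when
it passes its target row in column `1`. -/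

/-- Row of cycle position `c` (mod `2*m1`). -/
def cycRow (m1 c : ℕ) : ℕ :=
  if c % (2 * m1) < m1 then c % (2 * m1) else 2 * m1 - 1 - c % (2 * m1)

/-- Column of cycle position `c` (mod `2*m1`). -/
def cycCol (m1 c : ℕ) : Fin 3 :=
  if c % (2 * m1) < m1 then 1 else 2

/-- The point of the strip at cycle position `c`. -/
def cyc (m1 : ℕ) (h : 0 < m1) (c : ℕ) : Fin m1 × Fin 3 :=
  (⟨cycRow m1 c, by
    unfold cycRow
    have := Nat.mod_lt c (y := 2 * m1) (by omega)
    split_ifs <;> omega⟩, cycCol m1 c)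

/-- Number of rotation steps item `i` spends on the cycle. -/
def dexit (m1 : ℕ) (σ : Equiv.Perm (Fin m1)) (i : Fin m1) : ℕ :=
  ((σ i : ℕ) + 2 * m1 - (i : ℕ)) % (2 * m1)

/-- The trajectory of item `i`. -/
def colPath (m1 : ℕ) (h : 0 < m1) (σ : Equiv.Perm (Fin m1)) (i : Fin m1) (t : ℕ) :
    Fin m1 × Fin 3 :=
  if t = 0 then (i, 0)
  else if t ≤ dexit m1 σ i + 1 then cyc m1 h ((i : ℕ) + t - 1)
  else (σ i, 0)

lemma stripDist_eq {m1 : ℕ} (a b : Fin m1 × Fin 3) :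
    stripDist a b = Nat.dist (a.1 : ℕ) (b.1 : ℕ) + Nat.dist (a.2 : ℕ) (b.2 : ℕ) := rfl

lemma cyc_fst (m1 : ℕ) (h : 0 < m1) (c : ℕ) : ((cyc m1 h c).1 : ℕ) = cycRow m1 c := rfl

lemma cyc_snd (m1 : ℕ) (h : 0 < m1) (c : ℕ) : (cyc m1 h c).2 = cycCol m1 c := rfl

lemma cyc_snd_ne_zero (m1 : ℕ) (h : 0 < m1) (c : ℕ) : (cyc m1 h c).2 ≠ 0 := by
  rw [cyc_snd]
  unfold cycCol
  split_ifs <;> decide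

lemma cyc_inj (m1 : ℕ) (h : 0 < m1) {a b : ℕ}
    (heq : cyc m1 h a = cyc m1 h b) : a % (2 * m1) = b % (2 * m1) := by
  have ha : a % (2 * m1) < 2 * m1 := Nat.mod_lt _ (by omega)
  have hb : b % (2 * m1) < 2 * m1 := Nat.mod_lt _ (by omega)
  have hrow : cycRow m1 a = cycRow m1 b := congrArg (fun x => ((x.1 : Fin m1) : ℕ)) heq
  have hcol : cycCol m1 a = cycCol m1 b := congrArg Prod.snd heq
  unfold cycRow at hrow
  unfold cycCol at hcol
  split_ifs at hrow hcol with h1 h2 h2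
  · omega
  · exact absurd hcol (by decide)
  · exact absurd hcol (by decide)
  · omega

lemma mod_cancel {N a b k : ℕ} (ha : a < N) (hb : b < N)
    (h : (a + k) % N = (b + k) % N) : a = b := by
  have h1 : a + k ≡ b + k [MOD N] := h
  have h2 : a ≡ b [MOD N] := Nat.ModEq.add_right_cancel' k h1
  have h3 : a % N = b % N := h2
  rwa [Nat.mod_eq_of_lt ha, Nat.mod_eq_of_lt hb] at h3

lemma cyc_step (m1 : ℕ) (h : 0 < m1) (c : ℕ) :
    stripDist (cyc m1 h c) (cyc m1 h (c + 1)) ≤ 1 := by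
  have hc : c % (2 * m1) < 2 * m1 := Nat.mod_lt _ (by omega)
  have hmod : (c + 1) % (2 * m1) = (c % (2 * m1) + 1) % (2 * m1) := by
    conv_lhs => rw [Nat.add_mod]
    rw [Nat.mod_eq_of_lt (show 1 < 2 * m1 by omega)]
  have hstep : (c + 1) % (2 * m1) = c % (2 * m1) + 1 ∨
      (c % (2 * m1) = 2 * m1 - 1 ∧ (c + 1) % (2 * m1) = 0) := by
    rcases Nat.lt_or_ge (c % (2 * m1) + 1) (2 * m1) with h1 | h1
    · left; rw [hmod, Nat.mod_eq_of_lt h1]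
    · right
      constructor
      · omega
      · rw [hmod, show c % (2 * m1) + 1 = 2 * m1 by omega, Nat.mod_self]
  rw [stripDist_eq, cyc_fst, cyc_fst, cyc_snd, cyc_snd]
  unfold cycRow cycCol
  rcases hstep with h1 | ⟨h1, h2⟩ <;> rw [h1] <;> try rw [h2]
  all_goals split_ifs <;> simp [Nat.dist] <;> omega

lemma exit_pos (m1 : ℕ) (h : 0 < m1) (σ : Equiv.Perm (Fin m1)) (i : Fin m1) :
    cyc m1 h ((i : ℕ) + dexit m1 σ i) = (σ i, 1) := by
  have hσ : (σ i : ℕ) < m1 := (σ i).2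
  have hi : (i : ℕ) < m1 := i.2
  have key : ((i : ℕ) + dexit m1 σ i) % (2 * m1) = (σ i : ℕ) := by
    unfold dexit
    rw [Nat.add_mod_mod,
      show (i : ℕ) + ((σ i : ℕ) + 2 * m1 - (i : ℕ)) = (σ i : ℕ) + 2 * m1 by omega,
      Nat.add_mod_right]
    exact Nat.mod_eq_of_lt (by omega)
  have hfst : (((cyc m1 h ((i : ℕ) + dexit m1 σ i)).1 : Fin m1) : ℕ) = ((σ i : Fin m1) : ℕ) := by
    rw [cyc_fst]
    unfold cycRow
    rw [key, if_pos hσ]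
  have hsnd : (cyc m1 h ((i : ℕ) + dexit m1 σ i)).2 = 1 := by
    rw [cyc_snd]
    unfold cycCol
    rw [key, if_pos hσ]
  exact Prod.ext_iff.mpr ⟨Fin.ext hfst, hsnd⟩

lemma dexit_lt (m1 : ℕ) (h : 0 < m1) (σ : Equiv.Perm (Fin m1)) (i : Fin m1) :
    dexit m1 σ i < 2 * m1 := Nat.mod_lt _ (by omega)

/-- Single-column shuffle primitive: there is a universal constant `c` such
that any permutation `σ` of the `m1` items of a column (column `0`), with two
adjacent empty buffer columns (columns `1` and `2`) available, can be realized
by collision-free cardinal moves (no meet or head-on collisions) in at most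
`c·m1` timesteps. -/
theorem column_shuffle_linear_time :
    ∃ c : ℕ, ∀ (m1 : ℕ) (σ : Equiv.Perm (Fin m1)),
      ∃ T ≤ c * m1, ∃ p : Fin m1 → ℕ → Fin m1 × Fin 3,
        (∀ i, p i 0 = (i, 0)) ∧
        (∀ i, p i T = (σ i, 0)) ∧
        (∀ i t, stripDist (p i t) (p i (t + 1)) ≤ 1) ∧
        (∀ i j t, i ≠ j → t ≤ T → p i t ≠ p j t) ∧
        (∀ i j t, i ≠ j → t < T →
          ¬(p i (t + 1) = p j t ∧ p j (t + 1) = p i t)) := by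
  refine ⟨3, fun m1 σ => ?_⟩
  rcases Nat.eq_zero_or_pos m1 with hm | hm
  · subst hm
    exact ⟨0, by omega, fun i _ => (i, 0), fun i => i.elim0, fun i => i.elim0,
      fun i => i.elim0, fun i => i.elim0, fun i => i.elim0⟩
  · refine ⟨2 * m1 + 1, by omega, colPath m1 hm σ, ?_, ?_, ?_, ?_, ?_⟩
    · intro i; simp [colPath]
    · intro i
      have := dexit_lt m1 hm σ i
      unfold colPath
      rw [if_neg (by omega), if_neg (by omega)]
    · -- step distance ≤ 1
      intro i t
      have hd := dexit_lt m1 hm σ i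
      rcases Nat.eq_zero_or_pos t with ht | ht
      · subst ht
        have h1 : colPath m1 hm σ i 0 = (i, 0) := by simp [colPath]
        have h2 : colPath m1 hm σ i 1 = cyc m1 hm (i : ℕ) := by
          unfold colPath
          rw [if_neg (by omega), if_pos (by omega)]
          norm_num
        rw [h1, h2]
        have hi : (i : ℕ) % (2 * m1) = (i : ℕ) := Nat.mod_eq_of_lt (by omega)
        rw [stripDist_eq, cyc_fst, cyc_snd]
        unfold cycRow cycCol
        rw [hi, if_pos i.2, if_pos i.2]
        simp [Nat.dist]
      · by_cases hcyc : t + 1 ≤ dexit m1 σ i + 1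
        · -- both on cycle
          have h1 : colPath m1 hm σ i t = cyc m1 hm ((i : ℕ) + t - 1) := by
            unfold colPath; rw [if_neg (by omega), if_pos (by omega)]
          have h2 : colPath m1 hm σ i (t + 1) = cyc m1 hm ((i : ℕ) + t) := by
            unfold colPath; rw [if_neg (by omega), if_pos hcyc]
            congr 1
          rw [h1, h2, show (i : ℕ) + t = ((i : ℕ) + t - 1) + 1 by omega]
          exact cyc_step m1 hm _
        · by_cases hexit : t ≤ dexit m1 σ i + 1
          · -- exit step
            have ht' : t = dexit m1 σ i + 1 := by omega
            have h1 : colPath m1 hm σ i t = (σ i, 1) := by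
              unfold colPath; rw [if_neg (by omega), if_pos hexit,
                show (i : ℕ) + t - 1 = (i : ℕ) + dexit m1 σ i by omega]
              exact exit_pos m1 hm σ i
            have h2 : colPath m1 hm σ i (t + 1) = (σ i, 0) := by
              unfold colPath; rw [if_neg (by omega), if_neg (by omega)]
            rw [h1, h2]
            simp [stripDist, Nat.dist]
          · -- parked
            have h1 : colPath m1 hm σ i t = (σ i, 0) := by
              unfold colPath; rw [if_neg (by omega), if_neg hexit]
            have h2 : colPath m1 hm σ i (t + 1) = (σ i, 0) := by
              unfold colPath; rw [if_neg (by omega), if_neg (by omega)]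
            rw [h1, h2]
            simp [stripDist]
    · -- no meet
      intro i j t hij _ heq
      rcases Nat.eq_zero_or_pos t with ht | ht
      · subst ht
        simp only [colPath, if_pos rfl] at heq
        exact hij (by
          have := (Prod.ext_iff.mp heq).1
          exact this)
      · by_cases hi : t ≤ dexit m1 σ i + 1 <;> by_cases hj : t ≤ dexit m1 σ j + 1
        · -- both on cycle
          have h1 : colPath m1 hm σ i t = cyc m1 hm ((i : ℕ) + t - 1) := by
            unfold colPath; rw [if_neg (by omega), if_pos hi]
          have h2 : colPath m1 hm σ j t = cyc m1 hm ((j : ℕ) + t - 1) := by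
            unfold colPath; rw [if_neg (by omega), if_pos hj]
          rw [h1, h2] at heq
          have := cyc_inj m1 hm heq
          rw [show (i : ℕ) + t - 1 = (i : ℕ) + (t - 1) by omega,
            show (j : ℕ) + t - 1 = (j : ℕ) + (t - 1) by omega] at this
          exact hij (Fin.ext (mod_cancel (by omega) (by omega) this))
        · -- i cycle, j parked
          have h1 : colPath m1 hm σ i t = cyc m1 hm ((i : ℕ) + t - 1) := by
            unfold colPath; rw [if_neg (by omega), if_pos hi]
          have h2 : colPath m1 hm σ j t = (σ j, 0) := by
            unfold colPath; rw [if_neg (by omega), if_neg hj]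
          rw [h1, h2] at heq
          exact cyc_snd_ne_zero m1 hm _ (congrArg Prod.snd heq)
        · have h1 : colPath m1 hm σ i t = (σ i, 0) := by
            unfold colPath; rw [if_neg (by omega), if_neg hi]
          have h2 : colPath m1 hm σ j t = cyc m1 hm ((j : ℕ) + t - 1) := by
            unfold colPath; rw [if_neg (by omega), if_pos hj]
          rw [h1, h2] at heq
          exact cyc_snd_ne_zero m1 hm _ (congrArg Prod.snd heq.symm)
        · have h1 : colPath m1 hm σ i t = (σ i, 0) := by
            unfold colPath; rw [if_neg (by omega), if_neg hi]
          have h2 : colPath m1 hm σ j t = (σ j, 0) := by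
            unfold colPath; rw [if_neg (by omega), if_neg hj]
          rw [h1, h2] at heq
          exact hij (σ.injective (Prod.ext_iff.mp heq).1)
    · -- no head-on swap
      intro i j t hij _ ⟨h1, h2⟩
      rcases Nat.eq_zero_or_pos t with ht | ht
      · subst ht
        have hpi : colPath m1 hm σ i 1 = cyc m1 hm (i : ℕ) := by
          unfold colPath; rw [if_neg (by omega), if_pos (by omega)]
          congr 1
        have hpj : colPath m1 hm σ j 0 = (j, 0) := by simp [colPath]
        rw [hpi, hpj] at h1
        exact cyc_snd_ne_zero m1 hm _ (congrArg Prod.snd h1)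
      · by_cases hj : t ≤ dexit m1 σ j + 1
        · -- j on cycle at time t
          have hpjt : colPath m1 hm σ j t = cyc m1 hm ((j : ℕ) + t - 1) := by
            unfold colPath; rw [if_neg (by omega), if_pos hj]
          -- i must be on cycle at time t+1
          by_cases hi1 : t + 1 ≤ dexit m1 σ i + 1
          · have hpit1 : colPath m1 hm σ i (t + 1) = cyc m1 hm ((i : ℕ) + t) := by
              unfold colPath; rw [if_neg (by omega), if_pos hi1]
              congr 1
            -- i also on cycle at time t
            have hit : t ≤ dexit m1 σ i + 1 := by omega
            have hpit : colPath m1 hm σ i t = cyc m1 hm ((i : ℕ) + t - 1) := by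
              unfold colPath; rw [if_neg (by omega), if_pos hit]
            -- j on cycle at time t+1 (its position equals a cycle point)
            by_cases hj1 : t + 1 ≤ dexit m1 σ j + 1
            · have hpjt1 : colPath m1 hm σ j (t + 1) = cyc m1 hm ((j : ℕ) + t) := by
                unfold colPath; rw [if_neg (by omega), if_pos hj1]
                congr 1
              rw [hpit1, hpjt] at h1
              rw [hpjt1, hpit] at h2
              have e1 : ((i : ℕ) + t) % (2 * m1) = ((j : ℕ) + t - 1) % (2 * m1) :=
                cyc_inj m1 hm h1
              have e2 : ((j : ℕ) + t) % (2 * m1) = ((i : ℕ) + t - 1) % (2 * m1) :=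
                cyc_inj m1 hm h2
              have me1 : (i : ℕ) + t ≡ (j : ℕ) + t - 1 [MOD 2 * m1] := e1
              have me2 : (j : ℕ) + t ≡ (i : ℕ) + t - 1 [MOD 2 * m1] := e2
              have msum := me1.add me2
              have hrw : ((j : ℕ) + t - 1) + ((i : ℕ) + t - 1) =
                  ((i : ℕ) + t + ((j : ℕ) + t)) - 2 := by omega
              rw [hrw] at msum
              have hdvd : 2 * m1 ∣ ((i : ℕ) + t + ((j : ℕ) + t)) -
                  (((i : ℕ) + t + ((j : ℕ) + t)) - 2) :=
                (Nat.modEq_iff_dvd' (by omega)).mp msum.symm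
              rw [show ((i : ℕ) + t + ((j : ℕ) + t)) -
                  (((i : ℕ) + t + ((j : ℕ) + t)) - 2) = 2 by omega] at hdvd
              have hm1 : m1 = 1 := by
                have := Nat.le_of_dvd (by norm_num) hdvd
                omega
              subst hm1
              exact hij (Subsingleton.elim i j)
            · -- j parked at t+1
              have hpjt1 : colPath m1 hm σ j (t + 1) = (σ j, 0) := by
                unfold colPath; rw [if_neg (by omega), if_neg hj1]
              rw [hpjt1, hpit] at h2
              exact cyc_snd_ne_zero m1 hm _ (congrArg Prod.snd h2.symm)
          · -- i parked at t+1; column mismatch with j's cycle position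
            have hpit1 : colPath m1 hm σ i (t + 1) = (σ i, 0) := by
              unfold colPath; rw [if_neg (by omega), if_neg hi1]
            rw [hpit1, hpjt] at h1
            exact cyc_snd_ne_zero m1 hm _ (congrArg Prod.snd h1.symm)
        · -- j parked at time t
          have hpjt : colPath m1 hm σ j t = (σ j, 0) := by
            unfold colPath; rw [if_neg (by omega), if_neg hj]
          by_cases hi1 : t + 1 ≤ dexit m1 σ i + 1
          · have hpit1 : colPath m1 hm σ i (t + 1) = cyc m1 hm ((i : ℕ) + t) := by
              unfold colPath; rw [if_neg (by omega), if_pos hi1]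
              congr 1
            rw [hpit1, hpjt] at h1
            exact cyc_snd_ne_zero m1 hm _ (congrArg Prod.snd h1)
          · have hpit1 : colPath m1 hm σ i (t + 1) = (σ i, 0) := by
              unfold colPath; rw [if_neg (by omega), if_neg hi1]
            rw [hpit1, hpjt] at h1
            exact hij (σ.injective (Prod.ext_iff.mp h1).1)
end

section
/- For the sequential retrieval primitive on a full-density grid with two empty boundary columns, retrieving one designated vehicle requires displacing at most m1 + m2 blocking vehicles, each by exactly one cell, and these displacements together with the retrieved vehicle's motion can be scheduled collision-free; hence the single-retrieval makespan is at most m1 + m2 + c for a constant c. -/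
/-- Manhattan distance on an `m1 × m2` grid. -/
def gridDist {m1 m2 : ℕ} (a b : Fin m1 × Fin m2) : ℕ :=
  Nat.dist a.1 b.1 + Nat.dist a.2 b.2

/-- A cell of the inner `(m1-2) × (m2-2)` subgrid (rows and columns `1` to
`m1-2`, resp. `m2-2`). -/
def InnerCell {m1 m2 : ℕ} (v : Fin m1 × Fin m2) : Prop :=
  1 ≤ (v.1 : ℕ) ∧ (v.1 : ℕ) ≤ m1 - 2 ∧ 1 ≤ (v.2 : ℕ) ∧ (v.2 : ℕ) ≤ m2 - 2

/-- Trajectory of the designated vehicle: wait one step, climb from row `r`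
to row `0` during times `1..r+1`, then walk horizontally from column `c` to
the port column `q`. -/
def sPos (m1 m2 r c q : ℕ) (hr : r < m1) (hc : c < m2) (hq : q < m2) (t : ℕ) :
    Fin m1 × Fin m2 :=
  (⟨r - (t - 1), by omega⟩,
   ⟨if c ≤ q then c + min (t - (r + 1)) (q - c) else c - min (t - (r + 1)) (c - q),
    by split <;> omega⟩)

/-- The full plan: vehicles in the designated vehicle's column above it (and
everything to their right) shift one cell right into the empty last column
during times `1..T-1`; the designated vehicle follows `sPos`. -/
def plan (m1 m2 : ℕ) (h3 : 3 ≤ m2) (s : Fin m1 × Fin m2) (q T : ℕ) (hq : q < m2)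
    (v : {v : Fin m1 × Fin m2 // InnerCell v}) (t : ℕ) : Fin m1 × Fin m2 :=
  if v.val = s then sPos m1 m2 s.1 s.2 q s.1.isLt s.2.isLt hq t
  else if (v.val.1 : ℕ) < (s.1 : ℕ) ∧ (s.2 : ℕ) ≤ (v.val.2 : ℕ) ∧ 1 ≤ t ∧ t ≤ T - 1 then
    (v.val.1, ⟨(v.val.2 : ℕ) + 1, by have h := v.2.2.2.2; omega⟩)
  else v.val

/-- Single-vehicle retrieval at full density: with every inner cell occupied
by a vehicle, there is a universal constant `c` such that any designated
vehicle can be brought to any port on the top row by a collision-free plan of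
makespan at most `m1 + m2 + c`, in which at most `m1 + m2` other (blocking)
vehicles are displaced, each by at most one cell. -/
theorem single_retrieval_primitive :
    ∃ c : ℕ, ∀ m1 m2 : ℕ, ∀ hm1 : 3 ≤ m1, ∀ hm2 : 3 ≤ m2,
      ∀ (s : Fin m1 × Fin m2), InnerCell s → ∀ port : Fin m2,
      ∃ T ≤ m1 + m2 + c,
      ∃ p : {v : Fin m1 × Fin m2 // InnerCell v} → ℕ → Fin m1 × Fin m2,
        (∀ v, p v 0 = v.val) ∧
        (∀ v t, gridDist (p v t) (p v (t + 1)) ≤ 1) ∧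
        (∀ v w t, v ≠ w → t ≤ T → p v t ≠ p w t) ∧
        (∀ v w t, v ≠ w → t < T →
          ¬(p v (t + 1) = p w t ∧ p w (t + 1) = p v t)) ∧
        (∀ hs : InnerCell s, p ⟨s, hs⟩ T = ((⟨0, by omega⟩ : Fin m1), port)) ∧
        (∀ v, v.val ≠ s → gridDist (p v T) v.val ≤ 1) ∧
        Nat.card {v : {v : Fin m1 × Fin m2 // InnerCell v} //
          v.val ≠ s ∧ p v T ≠ v.val} ≤ m1 + m2 := by
  refine ⟨2, ?_⟩
  intro m1 m2 hm1 hm2 s hs port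
  obtain ⟨hs1, hs2, hs3, hs4⟩ := hs
  have hr1 : (s.1 : ℕ) < m1 := s.1.isLt
  have hc1 : (s.2 : ℕ) < m2 := s.2.isLt
  have hq1 : (port : ℕ) < m2 := port.isLt
  set r := (s.1 : ℕ) with hrdef
  set c := (s.2 : ℕ) with hcdef
  set q := (port : ℕ) with hqdef
  set T := r + ((q - c) + (c - q)) + 2 with hTdef
  have hT3 : 3 ≤ T := by omega
  set p := plan m1 m2 hm2 s q T hq1 with hpdef
  -- final position of non-designated vehicles
  have hfin : ∀ v, v.val ≠ s → p v T = v.val := by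
    intro v hv
    rw [hpdef, plan, if_neg hv, if_neg (by omega)]
  -- collision-freeness
  have hdist : ∀ v w t, v ≠ w → t ≤ T → p v t ≠ p w t := by
    intro v w t hvw htT heq
    have hvw' : v.val ≠ w.val := fun h => hvw (Subtype.ext h)
    have hvwne : ¬((v.val.1 : ℕ) = (w.val.1 : ℕ) ∧ (v.val.2 : ℕ) = (w.val.2 : ℕ)) :=
      fun h => hvw' (Prod.ext (Fin.ext h.1) (Fin.ext h.2))
    obtain ⟨hv1, hv2, hv3, hv4⟩ := v.2
    obtain ⟨hw1, hw2, hw3, hw4⟩ := w.2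
    rw [hpdef] at heq
    simp only [plan] at heq
    by_cases hv : v.val = s <;> by_cases hw : w.val = s
    · exact hvw' (hv.trans hw.symm)
    · have hwne : ¬((w.val.1 : ℕ) = r ∧ (w.val.2 : ℕ) = c) :=
        fun h => hw (Prod.ext (Fin.ext h.1) (Fin.ext h.2))
      rw [if_pos hv, if_neg hw] at heq
      by_cases hM : (w.val.1 : ℕ) < r ∧ c ≤ (w.val.2 : ℕ) ∧ 1 ≤ t ∧ t ≤ T - 1
      · rw [if_pos hM] at heq
        simp only [sPos, Prod.ext_iff, Fin.ext_iff, Fin.val_mk] at heq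
        split_ifs at heq <;> omega
      · rw [if_neg hM] at heq
        simp only [sPos, Prod.ext_iff, Fin.ext_iff, Fin.val_mk] at heq
        split_ifs at heq <;> omega
    · have hvne : ¬((v.val.1 : ℕ) = r ∧ (v.val.2 : ℕ) = c) :=
        fun h => hv (Prod.ext (Fin.ext h.1) (Fin.ext h.2))
      rw [if_neg hv, if_pos hw] at heq
      by_cases hM : (v.val.1 : ℕ) < r ∧ c ≤ (v.val.2 : ℕ) ∧ 1 ≤ t ∧ t ≤ T - 1
      · rw [if_pos hM] at heq
        simp only [sPos, Prod.ext_iff, Fin.ext_iff, Fin.val_mk] at heq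
        split_ifs at heq <;> omega
      · rw [if_neg hM] at heq
        simp only [sPos, Prod.ext_iff, Fin.ext_iff, Fin.val_mk] at heq
        split_ifs at heq <;> omega
    · rw [if_neg hv, if_neg hw] at heq
      split_ifs at heq <;>
        (simp only [Prod.ext_iff, Fin.ext_iff, Fin.val_mk] at heq; omega)
  refine ⟨T, by omega, p, ?_, ?_, hdist, ?_, ?_, ?_, ?_⟩
  · -- initial positions
    intro v
    rw [hpdef]
    simp only [plan]
    by_cases hv : v.val = s
    · rw [if_pos hv, hv]
      simp only [sPos, Prod.ext_iff, Fin.ext_iff, Fin.val_mk]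
      exact ⟨by omega, by split <;> omega⟩
    · rw [if_neg hv, if_neg (by omega)]
  · -- unit steps
    intro v t
    rw [hpdef]
    simp only [plan]
    by_cases hv : v.val = s
    · rw [if_pos hv, if_pos hv]
      simp only [sPos, gridDist, Nat.dist, Fin.val_mk]
      split_ifs <;> omega
    · rw [if_neg hv, if_neg hv]
      split_ifs <;> (simp only [gridDist, Nat.dist, Fin.val_mk]; omega)
  · -- no swaps
    intro v w t hvw htT hsw
    obtain ⟨hsw1, hsw2⟩ := hsw
    have hne_t : p v t ≠ p w t := hdist v w t hvw (le_of_lt htT)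
    by_cases hmv : p v (t + 1) = p v t
    · exact hne_t (by rw [← hmv, hsw1])
    by_cases hmw : p w (t + 1) = p w t
    · exact hne_t (by rw [← hsw2, hmw])
    have hvw' : v.val ≠ w.val := fun h => hvw (Subtype.ext h)
    have hvwne : ¬((v.val.1 : ℕ) = (w.val.1 : ℕ) ∧ (v.val.2 : ℕ) = (w.val.2 : ℕ)) :=
      fun h => hvw' (Prod.ext (Fin.ext h.1) (Fin.ext h.2))
    obtain ⟨hv1, hv2, hv3, hv4⟩ := v.2
    obtain ⟨hw1, hw2, hw3, hw4⟩ := w.2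
    -- a non-designated vehicle can only move at steps `0` and `T-1`
    have hmove : ∀ (u : {v : Fin m1 × Fin m2 // InnerCell v}), u.val ≠ s →
        p u (t + 1) ≠ p u t → t = 0 ∨ t = T - 1 := by
      intro u hu hmu
      rw [hpdef] at hmu
      simp only [plan] at hmu
      rw [if_neg hu, if_neg hu] at hmu
      by_cases h1 : (u.val.1 : ℕ) < r ∧ c ≤ (u.val.2 : ℕ) ∧ 1 ≤ t ∧ t ≤ T - 1 <;>
        by_cases h2 : (u.val.1 : ℕ) < r ∧ c ≤ (u.val.2 : ℕ) ∧ 1 ≤ t + 1 ∧ t + 1 ≤ T - 1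
      · rw [if_pos h1, if_pos h2] at hmu; exact absurd rfl hmu
      · omega
      · omega
      · rw [if_neg h1, if_neg h2] at hmu; exact absurd rfl hmu
    -- the designated vehicle is static at steps `0` and `T-1`
    have hsstatic : ∀ (u : {v : Fin m1 × Fin m2 // InnerCell v}), u.val = s →
        t = 0 ∨ t = T - 1 → p u (t + 1) = p u t := by
      intro u hu h0
      rw [hpdef]
      simp only [plan]
      rw [if_pos hu, if_pos hu]
      simp only [sPos, Prod.ext_iff, Fin.ext_iff, Fin.val_mk]
      refine ⟨by omega, ?_⟩
      split_ifs <;> omega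
    by_cases hv : v.val = s <;> by_cases hw : w.val = s
    · exact hvw' (hv.trans hw.symm)
    · exact hmv (hsstatic v hv (hmove w hw hmw))
    · exact hmw (hsstatic w hw (hmove v hv hmv))
    · rcases hmove v hv hmv with h0 | h0 <;>
      · rw [hpdef] at hsw1 hsw2
        simp only [plan] at hsw1 hsw2
        rw [if_neg hv, if_neg hw] at hsw1
        rw [if_neg hw, if_neg hv] at hsw2
        subst h0
        split_ifs at hsw1 hsw2 <;>
          (simp only [Prod.ext_iff, Fin.ext_iff, Fin.val_mk] at hsw1 hsw2; omega)
  · -- designated vehicle reaches the port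
    intro hs'
    rw [hpdef]
    simp only [plan]
    rw [if_pos trivial]
    simp only [sPos, Prod.ext_iff, Fin.ext_iff, Fin.val_mk]
    exact ⟨by omega, by split <;> omega⟩
  · -- displacement bound at time T
    intro v hv
    rw [hfin v hv]
    simp [gridDist, Nat.dist]
  · -- no vehicle other than s is displaced at time T
    haveI : IsEmpty {v : {v : Fin m1 × Fin m2 // InnerCell v} //
        v.val ≠ s ∧ p v T ≠ v.val} := ⟨fun x => x.2.2 (hfin x.1 x.2.1)⟩
    rw [Nat.card_of_isEmpty]
    omega
end
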